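/- Let ℓ be a prime, r ≥ 1, and Π a closed subgroup of GL_r(ℤ_ℓ). Let n ≥ 1 and let C ⊆ Π be a closed subgroup such that Π(n-1) ⊄ C. Then there exists U ∈ 𝒞_n(Π) with C ⊆ U. -/

import Mathlib

/-!
Since `Π` is profinite, the level subgroup `K = Π(n-1)` is a closed normal subgroup, and its
Frattini subgroup `Φ(K)` is closed and normal in `Π`, because conjugation acts on `K` by
topological automorphisms. Hence `C ⊔ Φ(K) = C · Φ(K)` is compact, so closed. It cannot contain
`K`: by Dedekind's rule `K` would then be generated by `C ∩ K` and `Φ(K)`, and the non-generating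
property of `Φ(K)` (a proper closed subgroup of a profinite group lies in a maximal open
subgroup) would give `K ≤ C`. An open subgroup separating `C · Φ(K)` from a point of `K` outside
it is the required `U`.
-/

open Matrix

/-- Reduction modulo `ℓ ^ n` on `GL_r(ℤ_ℓ)`. -/
noncomputable def glRed (l : ℕ) [Fact (Nat.Prime l)] (r n : ℕ) :
    GL (Fin r) ℤ_[l] →* GL (Fin r) (ZMod (l ^ n)) :=
  Matrix.GeneralLinearGroup.map (PadicInt.toZModPow n)

/-- `Π(n)`: the kernel of reduction modulo `ℓ ^ n` restricted to the closed subgroup `Π`,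
viewed as a subgroup of `Π`. -/
noncomputable def levelSubgroup (l : ℕ) [Fact (Nat.Prime l)] (r : ℕ)
    (P : Subgroup (GL (Fin r) ℤ_[l])) (n : ℕ) : Subgroup ↥P :=
  ((glRed l r n).comp P.subtype).ker

/-- A maximal proper open subgroup of a topological group. -/
def IsMaximalOpenSubgroup {G : Type*} [Group G] [TopologicalSpace G] (U : Subgroup G) : Prop :=
  IsOpen (U : Set G) ∧ U ≠ ⊤ ∧ ∀ V : Subgroup G, IsOpen (V : Set G) → U < V → V = ⊤

/-- The Frattini subgroup of a topological group: the intersection of all maximal proper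
open subgroups. -/
def frattiniOpen (G : Type*) [Group G] [TopologicalSpace G] : Subgroup G :=
  sInf {U : Subgroup G | IsMaximalOpenSubgroup U}

/-- The Frattini subgroup of a subgroup `K`, viewed as a subgroup of the ambient group. -/
def frattiniOf {G : Type*} [Group G] [TopologicalSpace G] (K : Subgroup G) : Subgroup G :=
  (frattiniOpen ↥K).map K.subtype

/-- `𝒞_n(Π)`: the set of open subgroups `U ⊆ Π` with `Φ(Π(n-1)) ⊆ U` but `Π(n-1) ⊄ U`. -/
noncomputable def Cn (l : ℕ) [Fact (Nat.Prime l)] (r : ℕ)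
    (P : Subgroup (GL (Fin r) ℤ_[l])) (n : ℕ) : Set (Subgroup ↥P) :=
  {U | IsOpen (U : Set ↥P) ∧ frattiniOf (levelSubgroup l r P (n - 1)) ≤ U ∧
    ¬ levelSubgroup l r P (n - 1) ≤ U}

instance {m n R : Type*} [TopologicalSpace R] [CompactSpace R] : CompactSpace (Matrix m n R) :=
  inferInstanceAs (CompactSpace (m → n → R))

instance {m n R : Type*} [TopologicalSpace R] [TotallyDisconnectedSpace R] :
    TotallyDisconnectedSpace (Matrix m n R) :=
  inferInstanceAs (TotallyDisconnectedSpace (m → n → R))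

instance {M : Type*} [Monoid M] [TopologicalSpace M] [ContinuousMul M] [T1Space M]
    [CompactSpace M] : CompactSpace Mˣ :=
  Units.isClosedEmbedding_embedProduct.compactSpace

instance {M : Type*} [Monoid M] [TopologicalSpace M] [TotallyDisconnectedSpace M] :
    TotallyDisconnectedSpace Mˣ :=
  ⟨isTotallyDisconnected_of_image Units.continuous_val.continuousOn Units.val_injective
    (isTotallyDisconnected_of_totallyDisconnectedSpace _)⟩

theorem PadicInt.continuous_toZModPow {p : ℕ} [Fact p.Prime] (n : ℕ) :
    Continuous (PadicInt.toZModPow n : ℤ_[p] → ZMod (p ^ n)) := by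
  have hball : (0 : ℝ) < p ^ (-(n : ℤ)) := zpow_pos (mod_cast (Fact.out : p.Prime).pos) _
  refine continuous_of_continuousAt_zero (PadicInt.toZModPow n : ℤ_[p] →+* ZMod (p ^ n)) ?_
  rw [ContinuousAt, map_zero, nhds_discrete (ZMod (p ^ n)), Filter.tendsto_pure]
  filter_upwards [Metric.closedBall_mem_nhds (0 : ℤ_[p]) hball] with x hx
  rwa [mem_closedBall_zero_iff, PadicInt.norm_le_pow_iff_mem_span_pow, ← PadicInt.ker_toZModPow]
    at hx

theorem continuous_glRed (l : ℕ) [Fact (Nat.Prime l)] (r n : ℕ) : Continuous (glRed l r n) :=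
  (PadicInt.continuous_toZModPow n).generalLinearGroup_map

section LevelSubgroup

variable (l : ℕ) [Fact (Nat.Prime l)] (r : ℕ) (P : Subgroup (GL (Fin r) ℤ_[l])) (n : ℕ)

instance : (levelSubgroup l r P n).Normal :=
  MonoidHom.normal_ker _

theorem isClosed_levelSubgroup : IsClosed (levelSubgroup l r P n : Set P) :=
  isClosed_singleton.preimage ((continuous_glRed l r n).comp continuous_subtype_val)

end LevelSubgroup

section Frattini

variable {G : Type*} [Group G] [TopologicalSpace G] [IsTopologicalGroup G]

theorem isMaximalOpenSubgroup_iff {M : Subgroup G} :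
    IsMaximalOpenSubgroup M ↔ IsOpen (M : Set G) ∧ IsCoatom M :=
  ⟨fun ⟨hM, hne, hmax⟩ => ⟨hM, hne, fun V hMV => hmax V (Subgroup.isOpen_mono hMV.le hM) hMV⟩,
    fun ⟨hM, hne, hmax⟩ => ⟨hM, hne, fun V _ hMV => hmax V hMV⟩⟩

theorem isClosed_frattiniOpen : IsClosed (frattiniOpen G : Set G) := by
  rw [frattiniOpen, Subgroup.coe_sInf]
  exact isClosed_biInter fun M hM => M.isClosed_of_isOpen hM.1

theorem frattiniOpen_le_comap {H : Type*} [Group H] [TopologicalSpace H] [IsTopologicalGroup H]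
    (e : G ≃ₜ* H) : frattiniOpen G ≤ (frattiniOpen H).comap (e : G →* H) := by
  intro x hx
  refine Subgroup.mem_sInf.mpr fun M hM => ?_
  replace hM := isMaximalOpenSubgroup_iff.mp hM
  refine Subgroup.mem_sInf.mp hx (M.comap (e : G →* H)) (isMaximalOpenSubgroup_iff.mpr ?_)
  exact ⟨hM.1.preimage e.continuous, (Subgroup.isCoatom_comap e.toMulEquiv).mpr hM.2⟩

instance (K : Subgroup G) [K.Normal] : (frattiniOf K).Normal where
  conj_mem := by
    rintro _ ⟨k, hk, rfl⟩ g
    let e : K ≃ₜ* K :=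
      { MulAut.conjNormal g with
        continuous_toFun :=
          (by fun_prop : Continuous fun k : K => g * (k : G) * g⁻¹).subtype_mk _
        continuous_invFun :=
          (by fun_prop : Continuous fun k : K => g⁻¹ * (k : G) * g⁻¹⁻¹).subtype_mk _ }
    exact ⟨e k, frattiniOpen_le_comap e hk, MulAut.conjNormal_apply g k⟩

theorem isCompact_frattiniOf {K : Subgroup G} (hK : IsCompact (K : Set G)) :
    IsCompact (frattiniOf K : Set G) := by
  have : CompactSpace K := isCompact_iff_compactSpace.mp hK
  exact isClosed_frattiniOpen.isCompact.image continuous_subtype_val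

theorem Subgroup.isCompact_sup_of_normal {H N : Subgroup G} [N.Normal]
    (hH : IsCompact (H : Set G)) (hN : IsCompact (N : Set G)) :
    IsCompact ((H ⊔ N : Subgroup G) : Set G) := by
  rw [Subgroup.mul_normal]
  exact hH.mul hN

variable [CompactSpace G]

theorem exists_isMaximalOpenSubgroup_le {U : Subgroup G} (hU : IsOpen (U : Set G))
    (hne : U ≠ ⊤) : ∃ M, IsMaximalOpenSubgroup M ∧ U ≤ M := by
  have := Subgroup.quotient_finite_of_isOpen U hU
  have := Subgroup.finiteIndex_of_finite_quotient (H := U)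
  obtain ⟨M, ⟨hUM, hM⟩, hmin⟩ :=
    (measure Subgroup.index).wf.has_min {V | U ≤ V ∧ V ≠ ⊤} ⟨U, le_rfl, hne⟩
  refine ⟨M, ⟨Subgroup.isOpen_mono hUM hU, hM, fun V _ hMV => ?_⟩, hUM⟩
  by_contra hV
  have : M.FiniteIndex := Subgroup.finiteIndex_of_le hUM
  exact hmin V ⟨hUM.trans hMV.le, hV⟩ (Subgroup.index_strictAnti hMV)

variable [TotallyDisconnectedSpace G]

theorem exists_isOpen_le_notMem {H : Subgroup G} (hH : IsClosed (H : Set G)) {x : G}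
    (hx : x ∉ H) : ∃ U : Subgroup G, IsOpen (U : Set G) ∧ H ≤ U ∧ x ∉ U := by
  by_contra! h
  have hH' : H = sInf {U : Subgroup G | IsOpen (U : Set G) ∧ H ≤ U} :=
    ProfiniteGrp.closedSubgroup_eq_sInf_open ⟨H, hH⟩
  exact hx (hH' ▸ Subgroup.mem_sInf.mpr fun U hU => h U hU.1 hU.2)

theorem exists_isMaximalOpenSubgroup_le_of_isClosed {H : Subgroup G} (hH : IsClosed (H : Set G))
    (hne : H ≠ ⊤) : ∃ M, IsMaximalOpenSubgroup M ∧ H ≤ M := by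
  obtain ⟨x, hx⟩ : ∃ x, x ∉ H := by simpa [Subgroup.eq_top_iff'] using hne
  obtain ⟨U, hU, hHU, hxU⟩ := exists_isOpen_le_notMem hH hx
  obtain ⟨M, hM, hUM⟩ :=
    exists_isMaximalOpenSubgroup_le hU fun hU => hxU (hU ▸ Subgroup.mem_top x)
  exact ⟨M, hM, hHU.trans hUM⟩

theorem eq_top_of_sup_frattiniOpen_eq_top {H : Subgroup G} (hH : IsClosed (H : Set G))
    (h : H ⊔ frattiniOpen G = ⊤) : H = ⊤ := by
  by_contra hne
  obtain ⟨M, hM, hHM⟩ := exists_isMaximalOpenSubgroup_le_of_isClosed hH hne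
  exact hM.2.1 (top_le_iff.mp (h ▸ sup_le hHM (sInf_le hM)))

theorem le_of_le_sup_frattiniOf {K C : Subgroup G} [(frattiniOf K).Normal]
    (hK : IsClosed (K : Set G)) (hC : IsClosed (C : Set G)) (h : K ≤ C ⊔ frattiniOf K) :
    K ≤ C := by
  have : CompactSpace K := isCompact_iff_compactSpace.mp hK.isCompact
  have hΦK : frattiniOf K ≤ K := Subgroup.map_subtype_le _
  have hK_le : K ≤ (K ⊓ C) ⊔ frattiniOf K := by
    intro k hk
    rw [← SetLike.mem_coe, Subgroup.mul_normal, Subgroup.inf_mul_assoc _ _ _ hΦK,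
      ← Subgroup.mul_normal]
    exact ⟨hk, h hk⟩
  have hsup : C.subgroupOf K ⊔ frattiniOpen K = ⊤ := by
    apply Subgroup.map_injective K.subtype_injective
    rw [Subgroup.map_sup, Subgroup.subgroupOf_map_subtype, ← MonoidHom.range_eq_map,
      Subgroup.range_subtype, inf_comm]
    exact le_antisymm (sup_le inf_le_left hΦK) hK_le
  exact Subgroup.subgroupOf_eq_top.mp
    (eq_top_of_sup_frattiniOpen_eq_top (hC.preimage continuous_subtype_val) hsup)

theorem exists_isOpen_frattiniOf_le_of_not_le {K C : Subgroup G} [K.Normal]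
    (hK : IsClosed (K : Set G)) (hC : IsClosed (C : Set G)) (hKC : ¬ K ≤ C) :
    ∃ U : Subgroup G, IsOpen (U : Set G) ∧ frattiniOf K ≤ U ∧ ¬ K ≤ U ∧ C ≤ U := by
  have hD : IsClosed ((C ⊔ frattiniOf K : Subgroup G) : Set G) :=
    (Subgroup.isCompact_sup_of_normal hC.isCompact (isCompact_frattiniOf hK.isCompact)).isClosed
  obtain ⟨x, hxK, hxD⟩ := Set.not_subset.mp (mt (le_of_le_sup_frattiniOf hK hC) hKC)
  obtain ⟨U, hU, hDU, hxU⟩ := exists_isOpen_le_notMem hD hxD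
  exact ⟨U, hU, le_sup_right.trans hDU, fun hKU => hxU (hKU hxK), le_sup_left.trans hDU⟩

end Frattini

theorem exists_mem_Cn_of_not_le_general (l : ℕ) [Fact (Nat.Prime l)] (r : ℕ)
    (P : Subgroup (GL (Fin r) ℤ_[l])) (hP : IsClosed (P : Set (GL (Fin r) ℤ_[l])))
    (n : ℕ) (C : Subgroup ↥P) (hC : IsClosed (C : Set ↥P))
    (hnle : ¬ levelSubgroup l r P (n - 1) ≤ C) :
    ∃ U ∈ Cn l r P n, C ≤ U := by
  have : CompactSpace P := isCompact_iff_compactSpace.mp hP.isCompact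
  obtain ⟨U, hU, hΦU, hKU, hCU⟩ :=
    exists_isOpen_frattiniOf_le_of_not_le (isClosed_levelSubgroup l r P (n - 1)) hC hnle
  exact ⟨U, ⟨hU, hΦU, hKU⟩, hCU⟩

/-- If `C ⊆ Π` is a closed subgroup with `Π(n-1) ⊄ C` (`n ≥ 1`), then `C` is contained in
some `U ∈ 𝒞_n(Π)`. -/
theorem exists_mem_Cn_of_not_le (l : ℕ) [Fact (Nat.Prime l)] (r : ℕ)
    (P : Subgroup (GL (Fin r) ℤ_[l])) (hP : IsClosed (P : Set (GL (Fin r) ℤ_[l])))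
    (n : ℕ) (hn : 1 ≤ n) (C : Subgroup ↥P) (hC : IsClosed (C : Set ↥P))
    (hnle : ¬ levelSubgroup l r P (n - 1) ≤ C) :
    ∃ U ∈ Cn l r P n, C ≤ U :=
  exists_mem_Cn_of_not_le_general l r P hP n C hC hnle
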